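/- arXiv:0903.1145 — 4 statements merged into one kernel-verified Lean document; each statement's English description precedes it below -/
import Mathlib

section
/- Let A be an associative supercommutative superalgebra and D a ℤ₂-graded left A-module. Then the ℤ₂-graded space Ā = D ⊕ A with product (d₁+a₁)∘(d₂+a₂) = (−1)^{ij} a₂·d₁ + a₁a₂ for homogeneous elements d₁+a₁ ∈ Ā_i, d₂+a₂ ∈ Ā_j is a Novikov superalgebra. -/
/-!
On homogeneous elements `u = d₁+a₁`, `v = d₂+a₂`, `w = d₃+a₃` the product is associative:
the sign acquired by rewriting `a₃·(a₂·d₁)` as `(a₂a₃)·d₁` cancels exactly against the signs of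
the definition, so both associators in the left-symmetry identity vanish. Right commutativity is
similar: moving `a₁` and `a₂` past each other in `A` supplies the sign `(−1)^{ij}`.
-/

/-- An associative supercommutative superalgebra over ℂ. -/
structure SuperCommAlg (V : Type*) [AddCommGroup V] [Module ℂ V] where
  mul : V →ₗ[ℂ] V →ₗ[ℂ] V
  grading : ZMod 2 → Submodule ℂ V
  spanning : ∀ x : V, ∃ x0 ∈ grading 0, ∃ x1 ∈ grading 1, x = x0 + x1
  indep : ∀ x : V, x ∈ grading 0 → x ∈ grading 1 → x = 0
  mul_mem : ∀ i j : ZMod 2, ∀ a ∈ grading i, ∀ b ∈ grading j, mul a b ∈ grading (i + j)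
  assoc : ∀ x y z : V, mul (mul x y) z = mul x (mul y z)
  scomm : ∀ i j : ZMod 2, ∀ a ∈ grading i, ∀ b ∈ grading j,
    mul a b = ((-1 : ℂ) ^ (i.val * j.val)) • mul b a

/-- A ℤ₂-graded left module over an associative supercommutative superalgebra. -/
structure SuperLeftMod {V : Type*} [AddCommGroup V] [Module ℂ V]
    (S : SuperCommAlg V) (D : Type*) [AddCommGroup D] [Module ℂ D] where
  act : V →ₗ[ℂ] D →ₗ[ℂ] D
  grading : ZMod 2 → Submodule ℂ D
  spanning : ∀ x : D, ∃ x0 ∈ grading 0, ∃ x1 ∈ grading 1, x = x0 + x1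
  indep : ∀ x : D, x ∈ grading 0 → x ∈ grading 1 → x = 0
  act_mem : ∀ i j : ZMod 2, ∀ a ∈ S.grading i, ∀ d ∈ grading j, act a d ∈ grading (i + j)
  act_mul : ∀ a b : V, ∀ d : D, act (S.mul a b) d = act a (act b d)

def superSign (i j : ZMod 2) : ℂ := (-1) ^ (i.val * j.val)

theorem superSign_add_left (i j k : ZMod 2) :
    superSign (i + j) k = superSign i k * superSign j k := by
  rw [superSign, superSign, superSign, ← pow_add, ← add_mul, neg_one_pow_eq_pow_mod_two,
    ZMod.val_add, Nat.mod_mul_mod, ← neg_one_pow_eq_pow_mod_two]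

theorem superSign_comm (i j : ZMod 2) : superSign i j = superSign j i := by
  rw [superSign, superSign, mul_comm]

theorem superSign_add_right (i j k : ZMod 2) :
    superSign i (j + k) = superSign i j * superSign i k := by
  rw [superSign_comm, superSign_add_left, superSign_comm j, superSign_comm k]

theorem superSign_mul_self (i j : ZMod 2) : superSign i j * superSign i j = 1 := by
  rw [superSign, ← pow_add, ← two_mul, pow_mul, neg_one_sq, one_pow]

namespace SuperLeftMod

variable {V D : Type*} [AddCommGroup V] [Module ℂ V] [AddCommGroup D] [Module ℂ D]
  {S : SuperCommAlg V} (M : SuperLeftMod S D)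

theorem act_act_eq_superSign_smul {i j : ZMod 2} {a b : V} (ha : a ∈ S.grading i) (hb : b ∈ S.grading j)
    (d : D) : M.act a (M.act b d) = superSign i j • M.act (S.mul b a) d := by
  rw [← M.act_mul, S.scomm i j a ha b hb, map_smul, LinearMap.smul_apply, superSign]

end SuperLeftMod

section ModuleExtension

variable {V D : Type*} [AddCommGroup V] [Module ℂ V] [AddCommGroup D] [Module ℂ D]
  (S : SuperCommAlg V) (M : SuperLeftMod S D)

/-- The parities `i`, `j` of the arguments are passed explicitly; the formula is the intended
product only on homogeneous elements of those parities. -/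
def moduleExtMul (i j : ZMod 2) (x y : D × V) : D × V :=
  (superSign i j • M.act y.2 x.1, S.mul x.2 y.2)

variable {S M}

theorem moduleExtMul_mem {i j : ZMod 2} {x y : D × V}
    (hx : x ∈ (M.grading i).prod (S.grading i)) (hy : y ∈ (M.grading j).prod (S.grading j)) :
    moduleExtMul S M i j x y ∈ (M.grading (i + j)).prod (S.grading (i + j)) := by
  refine ⟨Submodule.smul_mem _ _ ?_, S.mul_mem i j x.2 hx.2 y.2 hy.2⟩
  rw [add_comm i j]
  exact M.act_mem j i y.2 hy.2 x.1 hx.1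

theorem moduleExtMul_assoc {i j k : ZMod 2} (u : D × V) {v w : D × V}
    (hv : v.2 ∈ S.grading j) (hw : w.2 ∈ S.grading k) :
    moduleExtMul S M (i + j) k (moduleExtMul S M i j u v) w =
      moduleExtMul S M i (j + k) u (moduleExtMul S M j k v w) := by
  simp only [moduleExtMul, S.assoc, Prod.mk.injEq, and_true]
  rw [map_smul, M.act_act_eq_superSign_smul hw hv, smul_smul, smul_smul]
  congr 1
  rw [superSign_add_left, superSign_add_right, superSign_comm k j]
  linear_combination (superSign i j * superSign i k) * superSign_mul_self j k

theorem moduleExtMul_right_comm {i j : ZMod 2} (k : ZMod 2) {u v : D × V}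
    (hu : u.2 ∈ S.grading i) (hv : v.2 ∈ S.grading j) (w : D × V) :
    moduleExtMul S M (k + i) j (moduleExtMul S M k i w u) v =
      superSign i j • moduleExtMul S M (k + j) i (moduleExtMul S M k j w v) u := by
  simp only [moduleExtMul, Prod.smul_mk, Prod.mk.injEq]
  constructor
  · rw [map_smul, map_smul, M.act_act_eq_superSign_smul hv hu, ← M.act_mul]
    simp only [smul_smul, superSign_add_left, superSign_comm j i]
    congr 1
    ring
  · rw [S.assoc, S.assoc, S.scomm i j u.2 hu v.2 hv, map_smul, superSign]

end ModuleExtension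

/-- `Ā = D ⊕ A` with product
`(d₁+a₁)∘(d₂+a₂) = (−1)^{ij} a₂·d₁ + a₁a₂` on homogeneous elements is a
Novikov superalgebra: the product respects the grading and satisfies the
graded left-symmetry and graded right-commutativity identities. -/
theorem module_extension_is_novikov_super {V : Type*} [AddCommGroup V] [Module ℂ V]
    {D : Type*} [AddCommGroup D] [Module ℂ D]
    (S : SuperCommAlg V) (M : SuperLeftMod S D)
    (p : ZMod 2 → ZMod 2 → D × V → D × V → D × V)
    (hp : ∀ i j : ZMod 2, ∀ x y : D × V,
      p i j x y = (((-1 : ℂ) ^ (i.val * j.val)) • M.act y.2 x.1, S.mul x.2 y.2))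
    (Ab : ZMod 2 → Submodule ℂ (D × V))
    (hAb : ∀ i : ZMod 2, Ab i = (M.grading i).prod (S.grading i)) :
    ∀ i j k : ZMod 2, ∀ u ∈ Ab i, ∀ v ∈ Ab j, ∀ w ∈ Ab k,
      (p i j u v ∈ Ab (i + j)) ∧
      (p (i + j) k (p i j u v) w - p i (j + k) u (p j k v w)
        = ((-1 : ℂ) ^ (i.val * j.val)) •
            (p (j + i) k (p j i v u) w - p j (i + k) v (p i k u w))) ∧
      (p (k + i) j (p k i w u) v = ((-1 : ℂ) ^ (i.val * j.val)) • p (k + j) i (p k j w v) u) := by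
  obtain rfl : p = moduleExtMul S M := by
    funext i j x y
    exact hp i j x y
  intro i j k u hu v hv w hw
  simp only [hAb] at hu hv hw ⊢
  refine ⟨moduleExtMul_mem hu hv, ?_, moduleExtMul_right_comm k hu.2 hv.2 w⟩
  rw [moduleExtMul_assoc u hv.2 hw.2, moduleExtMul_assoc v hu.2 hw.2, sub_self, sub_self,
    smul_zero]
end

section
/- Let A be an associative supercommutative superalgebra, d an even derivation of A, and c ∈ A₀. Then the product u∘v = u·d(v) + c·u·v makes A into a Novikov superalgebra. -/
/-- A Novikov superalgebra over ℂ: a ℤ₂-graded vector space `V = A 0 ⊕ A 1`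
with a bilinear product respecting the grading, satisfying the graded
left-symmetry and graded right-commutativity identities. -/
structure NovikovSuperAlgebra (V : Type*) [AddCommGroup V] [Module ℂ V] where
  mul : V →ₗ[ℂ] V →ₗ[ℂ] V
  grading : ZMod 2 → Submodule ℂ V
  spanning : ∀ x : V, ∃ x0 ∈ grading 0, ∃ x1 ∈ grading 1, x = x0 + x1
  indep : ∀ x : V, x ∈ grading 0 → x ∈ grading 1 → x = 0
  mul_mem : ∀ i j : ZMod 2, ∀ u ∈ grading i, ∀ v ∈ grading j, mul u v ∈ grading (i + j)
  super_left_sym : ∀ i j : ZMod 2, ∀ u ∈ grading i, ∀ v ∈ grading j, ∀ w : V,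
    mul (mul u v) w - mul u (mul v w)
      = ((-1 : ℂ) ^ (i.val * j.val)) • (mul (mul v u) w - mul v (mul u w))
  super_right_comm : ∀ i j : ZMod 2, ∀ u ∈ grading i, ∀ v ∈ grading j, ∀ w : V,
    mul (mul w u) v = ((-1 : ℂ) ^ (i.val * j.val)) • mul (mul w v) u

/-- The (ungraded) Novikov algebra identities for a bilinear product. -/
def IsNovikovMul {V : Type*} [AddCommGroup V] [Module ℂ V]
    (mul : V →ₗ[ℂ] V →ₗ[ℂ] V) : Prop :=
  (∀ x y z : V, mul (mul x y) z - mul x (mul y z) = mul (mul y x) z - mul y (mul x z)) ∧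
  (∀ x y z : V, mul (mul z x) y = mul (mul z y) x)

/-- Supercommutator of elements of parities `i`, `j`. -/
def sbr {V : Type*} [AddCommGroup V] [Module ℂ V]
    (mul : V →ₗ[ℂ] V →ₗ[ℂ] V) (i j : ZMod 2) (u v : V) : V :=
  mul u v - ((-1 : ℂ) ^ (i.val * j.val)) • mul v u

/-! Write the product as `u ∘ v = u · D v` with the even operator `D = d + c ·`, using that the
even element `c` is central. Right supercommutativity `(w ∘ u) ∘ v = ± (w ∘ v) ∘ u` is then just
supercommutativity of `D u` and `D v`. The associator of `∘` equals `(u · v) · (c · D w - D² w)`,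
which depends on `u, v` only through `u · v = ± v · u`; this gives left supersymmetry. -/

namespace SuperCommAlg

variable {V : Type*} [AddCommGroup V] [Module ℂ V] (S : SuperCommAlg V)

theorem mul_comm_of_mem_zero {a : V} (ha : a ∈ S.grading 0) (x : V) :
    S.mul a x = S.mul x a := by
  obtain ⟨x₀, hx₀, x₁, hx₁, rfl⟩ := S.spanning x
  have h₀ := S.scomm 0 0 a ha x₀ hx₀
  have h₁ := S.scomm 0 1 a ha x₁ hx₁
  simp only [ZMod.val_zero, zero_mul, pow_zero, one_smul] at h₀ h₁
  rw [map_add, map_add, LinearMap.add_apply, h₀, h₁]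

theorem mul_left_comm_of_mem_zero {a : V} (ha : a ∈ S.grading 0) (x y : V) :
    S.mul x (S.mul a y) = S.mul a (S.mul x y) := by
  rw [← S.assoc, ← S.mul_comm_of_mem_zero ha x, S.assoc]

theorem mul_right_comm {i j : ZMod 2} {a b : V} (ha : a ∈ S.grading i)
    (hb : b ∈ S.grading j) (x : V) :
    S.mul (S.mul x a) b = ((-1 : ℂ) ^ (i.val * j.val)) • S.mul (S.mul x b) a := by
  rw [S.assoc, S.scomm i j a ha b hb, map_smul, S.assoc]

variable {S}

theorem mem_grading_add_mulLeft {d : V →ₗ[ℂ] V}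
    (hd : ∀ i : ZMod 2, ∀ a ∈ S.grading i, d a ∈ S.grading i)
    {c : V} (hc : c ∈ S.grading 0) {i : ZMod 2} {a : V} (ha : a ∈ S.grading i) :
    (d + S.mul c) a ∈ S.grading i := by
  have hca := S.mul_mem 0 i c hc a ha
  rw [zero_add] at hca
  exact add_mem (hd i a ha) hca

theorem add_mulLeft_map_mul {d : V →ₗ[ℂ] V}
    (hd : ∀ a b : V, d (S.mul a b) = S.mul (d a) b + S.mul a (d b))
    {c : V} (hc : c ∈ S.grading 0) (a b : V) :
    (d + S.mul c) (S.mul a b) = S.mul (d a) b + S.mul a ((d + S.mul c) b) := by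
  simp only [LinearMap.add_apply, hd, map_add, S.mul_left_comm_of_mem_zero hc]
  abel

variable (S)

def derivationMul (d : V →ₗ[ℂ] V) (c : V) : V →ₗ[ℂ] V →ₗ[ℂ] V :=
  S.mul.compl₂ (d + S.mul c)

theorem derivationMul_apply (d : V →ₗ[ℂ] V) {c : V} (hc : c ∈ S.grading 0) (u v : V) :
    S.derivationMul d c u v = S.mul u (d v) + S.mul c (S.mul u v) := by
  rw [derivationMul, LinearMap.compl₂_apply, LinearMap.add_apply, map_add,
    S.mul_left_comm_of_mem_zero hc]

variable {S}

/-- Since `D (v · x) = d v · x + v · D x`, the associator is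
`u · (D v - d v) · D w - u · v · D (D w)`, and `D v - d v = c · v` with `c` central. -/
theorem derivationMul_associator {d : V →ₗ[ℂ] V}
    (hd : ∀ a b : V, d (S.mul a b) = S.mul (d a) b + S.mul a (d b))
    {c : V} (hc : c ∈ S.grading 0) (u v w : V) :
    S.derivationMul d c (S.derivationMul d c u v) w
        - S.derivationMul d c u (S.derivationMul d c v w) = S.mul (S.mul u v) (S.mul c ((d + S.mul c) w) - (d + S.mul c) ((d + S.mul c) w)) := by
  simp only [derivationMul, LinearMap.compl₂_apply]
  rw [add_mulLeft_map_mul hd hc]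
  simp only [map_add, map_sub, S.assoc, LinearMap.add_apply, S.mul_left_comm_of_mem_zero hc]
  abel

end SuperCommAlg

/-- if `d` is an even derivation of an associative supercommutative
superalgebra and `c` is an even element, then `u∘v = u·d(v) + c·u·v` makes the
space into a Novikov superalgebra (same grading). -/
theorem derivation_product_is_novikov_super {V : Type*} [AddCommGroup V] [Module ℂ V]
    (S : SuperCommAlg V) (d : V →ₗ[ℂ] V)
    (hd_even : ∀ i : ZMod 2, ∀ a ∈ S.grading i, d a ∈ S.grading i)
    (hd_leibniz : ∀ a b : V, d (S.mul a b) = S.mul (d a) b + S.mul a (d b))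
    (c : V) (hc : c ∈ S.grading 0) :
    ∃ N : NovikovSuperAlgebra V, N.grading = S.grading ∧
      ∀ u v : V, N.mul u v = S.mul u (d v) + S.mul c (S.mul u v) := by
  refine ⟨⟨S.derivationMul d c, S.grading, S.spanning, S.indep, ?mul_mem, ?left_symm,
    ?right_comm⟩, rfl, S.derivationMul_apply d hc⟩
  case mul_mem =>
    intro i j u hu v hv
    exact S.mul_mem i j u hu _ (SuperCommAlg.mem_grading_add_mulLeft hd_even hc hv)
  case left_symm =>
    intro i j u hu v hv w
    rw [SuperCommAlg.derivationMul_associator hd_leibniz hc,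
      SuperCommAlg.derivationMul_associator hd_leibniz hc, S.scomm i j u hu v hv,
      LinearMap.map_smul₂]
  case right_comm =>
    intro i j u hu v hv w
    exact S.mul_right_comm (SuperCommAlg.mem_grading_add_mulLeft hd_even hc hu)
      (SuperCommAlg.mem_grading_add_mulLeft hd_even hc hv) w
end

section
/- Let A be a one-dimensional Novikov algebra spanned by e with e∘e = 0, and let M be a 2-dimensional A-module with L, R the matrices of L_M(e), R_M(e). Then R² = 0. -/
/-! For `A = ℂe` with `e∘e = 0`, the module axioms at `x = y = e` give `RL = 0` and
`R² = -LR`, hence `R³ = -(RL)R = 0`. A nilpotent endomorphism of a space of dimension `2`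
has vanishing square (Cayley–Hamilton), so `R² = 0`. -/

theorem pow_three_eq_zero_of_mul_eq_zero_of_mul_self_eq_neg {A : Type*} [Ring A] {l r : A}
    (hrl : r * l = 0) (hrr : r * r = -(l * r)) : r ^ 3 = 0 :=
  calc r ^ 3 = r * (r * r) := by rw [pow_succ', sq]
    _ = -(r * l * r) := by rw [hrr, mul_neg, mul_assoc]
    _ = 0 := by rw [hrl, zero_mul, neg_zero]

theorem IsNilpotent.pow_finrank_eq_zero {R M : Type*} [CommRing R] [IsDomain R] [AddCommGroup M]
    [Module R M] [Module.Finite R M] [Module.Free R M] {φ : Module.End R M}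
    (h : IsNilpotent φ) : φ ^ Module.finrank R M = 0 := by
  simpa [h.charpoly_eq_X_pow_finrank] using φ.aeval_self_charpoly

theorem one_dim_module_R_sq_zero_general
    (mulA : ℂ →ₗ[ℂ] ℂ →ₗ[ℂ] ℂ) (hA : mulA 1 1 = 0)
    (LM RM : ℂ →ₗ[ℂ] Module.End ℂ (Fin 2 → ℂ))
    (h1 : ∀ x y : ℂ, LM (mulA x y) = RM y * LM x)
    (h2 : ∀ x y : ℂ, RM (mulA x y) - RM y * RM x = LM x * RM y - RM y * LM x) :
    RM 1 * RM 1 = 0 := by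
  have hRL : RM 1 * LM 1 = 0 := by simpa [hA] using (h1 1 1).symm
  have hRR : RM 1 * RM 1 = -(LM 1 * RM 1) :=
    neg_eq_iff_eq_neg.mp (by simpa [hA, hRL] using h2 1 1)
  have hnil : IsNilpotent (RM 1) :=
    ⟨3, pow_three_eq_zero_of_mul_eq_zero_of_mul_self_eq_neg hRL hRR⟩
  simpa [sq, Module.finrank_fin_fun] using hnil.pow_finrank_eq_zero

/-- let `A = ℂe` be the one-dimensional Novikov algebra with
`e∘e = 0` (so the product `mulA` vanishes on `e = 1`), and let `LM, RM` give a
module structure on the 2-dimensional space `Fin 2 → ℂ`.  Then the right action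
`R = RM e` satisfies `R² = 0`. -/
theorem one_dim_module_R_sq_zero
    (mulA : ℂ →ₗ[ℂ] ℂ →ₗ[ℂ] ℂ) (hA : mulA 1 1 = 0)
    (LM RM : ℂ →ₗ[ℂ] Module.End ℂ (Fin 2 → ℂ))
    (h1 : ∀ x y : ℂ, LM (mulA x y) = RM y * LM x)
    (h2 : ∀ x y : ℂ, RM (mulA x y) - RM y * RM x = LM x * RM y - RM y * LM x)
    (h3 : ∀ x y : ℂ, RM x * RM y = RM y * RM x)
    (h4 : ∀ x y : ℂ, LM x * LM y - LM y * LM x = LM (mulA x y - mulA y x)) :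
    RM 1 * RM 1 = 0 :=
  one_dim_module_R_sq_zero_general mulA hA LM RM h1 h2
end

section
/- Let L, R be 2×2 complex matrices satisfying RL = L and R² = R + L − LR. If LR ≠ RL, then L is conjugate (by a change of basis that preserves the pair of relations) to the matrix diag(a, 0) for some a ≠ 0; in particular det L = 0 and L has a nonzero eigenvalue. -/
/-!
Put `S = R - 1`. The relations become `S * L = 0` and `S² + S + L * S = 0`, and `L * R ≠ R * L`
becomes `L * S ≠ 0`. Then `S ≠ 0`, so `S * L = 0` forces `det L = 0`. If moreover `tr L = 0`,
then `L² = 0` by Cayley–Hamilton, and `det S = 0` gives `S² = (tr S) • S`, so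
`(tr S + 1) • S + L * S = 0`; multiplying by `L` on the left yields `(tr S + 1) • (L * S) = 0`,
hence `tr S = -1` and `L * S = 0`, a contradiction. A `2 × 2` matrix with `det L = 0` and
`tr L ≠ 0` has the distinct eigenvalues `tr L` and `0`, hence is conjugate to
`diag(tr L, 0)`.
-/

open Matrix

namespace Matrix

theorem mul_self_fin_two {R : Type*} [CommRing R] (M : Matrix (Fin 2) (Fin 2) R) :
    M * M = M.trace • M - M.det • 1 := by
  ext i j
  fin_cases i <;> fin_cases j <;> simp [mul_apply, trace_fin_two, det_fin_two] <;> ring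

theorem exists_mulVec_ne_zero {n R : Type*} [Fintype n] [CommRing R] {A : Matrix n n R}
    (hA : A ≠ 0) : ∃ v, A *ᵥ v ≠ 0 := by
  by_contra! h
  exact hA (ext_iff_mulVec.mpr fun v => by simp [h v])

section Field

variable {K : Type*} [Field K]

section

variable {n : Type*} [Fintype n] [DecidableEq n] {A B : Matrix n n K}

theorem det_right_eq_zero_of_mul_eq_zero (h : A * B = 0) (hA : A ≠ 0) : B.det = 0 := by
  by_contra hB
  exact hA (((isUnit_iff_isUnit_det B).mpr (isUnit_iff_ne_zero.mpr hB)).mul_left_eq_zero.mp h)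

theorem det_left_eq_zero_of_mul_eq_zero (h : A * B = 0) (hB : B ≠ 0) : A.det = 0 := by
  by_contra hA
  exact hB (((isUnit_iff_isUnit_det A).mpr (isUnit_iff_ne_zero.mpr hA)).mul_right_eq_zero.mp h)

end

theorem hasEigenvalue_trace_of_det_eq_zero (A : Matrix (Fin 2) (Fin 2) K) (h : A.det = 0) :
    Module.End.HasEigenvalue (toLin' A) A.trace := by
  rw [Module.End.hasEigenvalue_iff_isRoot_charpoly, charpoly_toLin', charpoly_fin_two]
  simp [h]
  ring

theorem exists_conj_diagonal_of_mulVec_eq {A : Matrix (Fin 2) (Fin 2) K} {a : K} {v u : Fin 2 → K}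
    (hv : A *ᵥ v = a • v) (hu : A *ᵥ u = 0) (ha : a ≠ 0) (hv0 : v ≠ 0) (hu0 : u ≠ 0) :
    ∃ P : Matrix (Fin 2) (Fin 2) K, IsUnit P ∧ P⁻¹ * A * P = diagonal ![a, 0] := by
  set P : Matrix (Fin 2) (Fin 2) K := (of ![v, u])ᵀ
  have hAP : A * P = P * diagonal ![a, 0] := by
    ext i j
    fin_cases j
    · have := congrFun hv i
      simp [P, mul_apply, mulVec, dotProduct] at this ⊢
      linear_combination this
    · simpa [P, mul_apply, mulVec, dotProduct] using congrFun hu i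
  have hP : IsUnit P := by
    rw [isUnit_iff_isUnit_det, isUnit_iff_ne_zero, Ne, ← exists_mulVec_eq_zero_iff]
    rintro ⟨c, hc_ne, hc⟩
    have hcomb : c 0 • v + c 1 • u = 0 := by
      rw [← hc]
      ext i
      simp [P, mulVec, dotProduct, Fin.sum_univ_two]
      ring
    have hc₀ : c 0 = 0 := by
      have := congrArg (A *ᵥ ·) hcomb
      simp only [mulVec_add, mulVec_smul, hv, hu, smul_zero, add_zero, mulVec_zero,
        smul_smul] at this
      simpa [ha, hv0] using this
    have hc₁ : c 1 = 0 := by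
      rw [hc₀, zero_smul, zero_add] at hcomb
      simpa [hu0] using hcomb
    exact hc_ne (by ext i; fin_cases i <;> simp [hc₀, hc₁])
  refine ⟨P, hP, ?_⟩
  rw [mul_assoc, hAP, ← mul_assoc, nonsing_inv_mul _ ((isUnit_iff_isUnit_det P).mp hP), one_mul]

theorem exists_conj_diagonal_of_det_eq_zero {A : Matrix (Fin 2) (Fin 2) K} (hdet : A.det = 0)
    (htr : A.trace ≠ 0) :
    ∃ P : Matrix (Fin 2) (Fin 2) K, IsUnit P ∧ P⁻¹ * A * P = diagonal ![A.trace, 0] := by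
  set F := A.trace • 1 - A
  have hAA : A * A = A.trace • A := by rw [mul_self_fin_two, hdet, zero_smul, sub_zero]
  have hAF : A * F = 0 := by rw [mul_sub, hAA, mul_smul_comm, mul_one, sub_self]
  have hA : A ≠ 0 := by rintro rfl; simp at htr
  have hF : F ≠ 0 := by
    intro h
    have := congrArg trace h
    simp [F] at this
    exact htr (by linear_combination this)
  obtain ⟨x, hx⟩ := exists_mulVec_ne_zero hA
  obtain ⟨y, hy⟩ := exists_mulVec_ne_zero hF
  refine exists_conj_diagonal_of_mulVec_eq (v := A *ᵥ x) (u := F *ᵥ y) ?_ ?_ htr hx hy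
  · rw [mulVec_mulVec, hAA, smul_mulVec]
  · rw [mulVec_mulVec, hAF, zero_mulVec]

theorem trace_ne_zero_of_mul_eq_zero_of_mul_ne_zero {L S : Matrix (Fin 2) (Fin 2) K}
    (hSL : S * L = 0) (hS : S * S + S + L * S = 0) (hLS : L * S ≠ 0) : L.trace ≠ 0 := by
  intro htr
  have hL : L ≠ 0 := by rintro rfl; simp at hLS
  have hS0 : S ≠ 0 := by rintro rfl; simp at hLS
  have hLL : L * L = 0 := by
    rw [mul_self_fin_two, htr, det_right_eq_zero_of_mul_eq_zero hSL hS0]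
    simp
  have hSS : S * S = S.trace • S := by
    rw [mul_self_fin_two, det_left_eq_zero_of_mul_eq_zero hSL hL, zero_smul, sub_zero]
  have hkey : (S.trace + 1) • S + L * S = 0 := by rw [← hS, hSS, add_smul, one_smul]
  have htrS : S.trace + 1 = 0 := by
    have := congrArg (L * ·) hkey
    simp only [mul_add, mul_smul_comm, ← mul_assoc, hLL, zero_mul, add_zero, mul_zero] at this
    exact (smul_eq_zero.mp this).resolve_right hLS
  rw [htrS, zero_smul, zero_add] at hkey
  exact hLS hkey

end Field

end Matrix

/-- if 2×2 complex matrices satisfy `RL = L`,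
`R² = R + L − LR` and `LR ≠ RL`, then `L` is conjugate to `diag(a,0)` with
`a ≠ 0`; in particular `det L = 0` and `L` has a nonzero eigenvalue. -/
theorem L_diagonal_form (L R : Matrix (Fin 2) (Fin 2) ℂ)
    (h1 : R * L = L) (h2 : R * R = R + L - L * R) (h3 : L * R ≠ R * L) :
    (∃ (P : Matrix (Fin 2) (Fin 2) ℂ) (a : ℂ), IsUnit P ∧ a ≠ 0 ∧
      P⁻¹ * L * P = Matrix.diagonal ![a, 0]) ∧
    L.det = 0 ∧
    (∃ a : ℂ, a ≠ 0 ∧ Module.End.HasEigenvalue (Matrix.toLin' L) a) := by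
  set S := R - 1
  have hSL : S * L = 0 := by rw [sub_mul, h1, one_mul, sub_self]
  have hS : S * S + S + L * S = 0 := by
    rw [show S * S + S + L * S = R * R - (R + L - L * R) by simp only [S]; noncomm_ring, h2,
      sub_self]
  have hLS : L * S ≠ 0 := by
    have : L * S = L * R - R * L := by
      rw [← sub_zero (L * S), ← hSL]
      simp only [S]
      noncomm_ring
    exact this ▸ sub_ne_zero.mpr h3
  have hdet : L.det = 0 := det_right_eq_zero_of_mul_eq_zero hSL (by rintro h; simp [h] at hLS)
  have htr := trace_ne_zero_of_mul_eq_zero_of_mul_ne_zero hSL hS hLS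
  obtain ⟨P, hP, hPL⟩ := exists_conj_diagonal_of_det_eq_zero hdet htr
  exact ⟨⟨P, L.trace, hP, htr, hPL⟩, hdet, L.trace, htr, hasEigenvalue_trace_of_det_eq_zero L hdet⟩
end
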